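/- Sharpness as a multi-distribution f-divergence (Proposition 1): suppose π_i := μ(Y = e_i) > 0 for all i, let P be the law of g(X), and P_i the conditional law of g(X) given Y = e_i. Then SHARP_F(g) := E[D_F(E[Y|g(X)], E[Y])] = ∫ [ F(π_1·(dP_1/dP)(t), …, π_k·(dP_k/dP)(t)) − F(π_1, …, π_k) ] dP(t). -/

import Mathlib

open MeasureTheory ProbabilityTheory
open scoped RealInnerProductSpace

/-- Bregman divergence generated by `F`. -/
noncomputable def breg {k : ℕ} (F : EuclideanSpace ℝ (Fin k) → ℝ)
    (p q : EuclideanSpace ℝ (Fin k)) : ℝ :=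
  F p - F q - ⟪gradient F q, p - q⟫

/-- The probability simplex in `ℝ^k`. -/
def simplexE (k : ℕ) : Set (EuclideanSpace ℝ (Fin k)) :=
  {p | (∀ i, 0 ≤ p i) ∧ ∑ i, p i = 1}

/-- A vector in `ℝ^k` given coordinatewise. -/
def vecE {k : ℕ} (f : Fin k → ℝ) : EuclideanSpace ℝ (Fin k) := WithLp.toLp 2 f

/-!
The conditional expectation `E[Y | g(X)]` is `η ∘ g ∘ X`, where the `i`-th coordinate of
`η(t)` is the density at `t` of the law of `g(X)` on `{Y = e_i}` with respect to the law `P` of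
`g(X)`, that is `π_i (dP_i/dP)(t)`: both sides have the same integral over every event
`{g(X) ∈ A}`. By the tower property `E[E[Y | g(X)]] = E[Y] = π`, so the linear part of the
Bregman divergence integrates to zero and `SHARP_F(g) = E[F(η(g(X)))] - F(π)`; pushing forward
to `P` gives the right-hand side. Everything is integrable because `η(t)` is `P`-a.e. in the
simplex (its coordinates are conditional probabilities of a partition), where `F` is bounded.
-/

lemma isCompact_simplexE (k : ℕ) : IsCompact (simplexE k) := by
  convert (isCompact_stdSimplex ℝ (Fin k)).image (PiLp.continuous_toLp 2 fun _ : Fin k => ℝ)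
  ext p
  exact ⟨fun hp => ⟨p.ofLp, hp, rfl⟩, by rintro ⟨q, hq, rfl⟩; exact hq⟩

theorem ContinuousOn.integrable_comp_of_ae_mem {α E G : Type*} [MeasurableSpace α]
    {μ : Measure α} [IsFiniteMeasure μ] [TopologicalSpace E] [T2Space E] [MeasurableSpace E]
    [OpensMeasurableSpace E] [NormedAddCommGroup G] {F : E → G} {K : Set E}
    (hF : ContinuousOn F K) (hK : IsCompact K) {Z : α → E} (hZ : AEMeasurable Z μ)
    (hZK : ∀ᵐ a ∂μ, Z a ∈ K) : Integrable (fun a => F (Z a)) μ := by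
  have hKm : MeasurableSet K := hK.isClosed.measurableSet
  have hlaw : (μ.map Z).restrict K = μ.map Z :=
    Measure.restrict_eq_self_of_ae_mem ((ae_map_iff hZ hKm).2 hZK)
  obtain ⟨C, hC⟩ := hK.exists_bound_of_continuousOn hF
  refine Integrable.of_bound ?_ C (hZK.mono fun a ha => hC _ ha)
  exact (hlaw ▸ hF.aestronglyMeasurable_of_isCompact hK hKm).comp_aemeasurable hZ

theorem integral_breg_integral {α : Type*} [MeasurableSpace α] {μ : Measure α}
    [IsProbabilityMeasure μ] {k : ℕ} {F : EuclideanSpace ℝ (Fin k) → ℝ}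
    {Z : α → EuclideanSpace ℝ (Fin k)} (hZ : Integrable Z μ)
    (hFZ : Integrable (fun a => F (Z a)) μ) :
    ∫ a, breg F (Z a) (∫ a, Z a ∂μ) ∂μ = ∫ a, F (Z a) ∂μ - F (∫ a, Z a ∂μ) := by
  set q := ∫ a, Z a ∂μ
  have hZc : Integrable (fun a => Z a - q) μ := hZ.sub (integrable_const q)
  have hFZc : Integrable (fun a => F (Z a) - F q) μ := hFZ.sub (integrable_const (F q))
  simp only [breg]
  rw [integral_sub hFZc (hZc.const_inner _), integral_inner hZc,
    integral_sub hFZ (integrable_const _), integral_sub hZ (integrable_const _)]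
  simp [q]

theorem MeasureTheory.Measure.toReal_mul_rnDeriv_inv_smul {α : Type*} [MeasurableSpace α]
    (ρ ν : Measure α) [IsFiniteMeasure ρ] [SigmaFinite ν] {c : ENNReal} (h0 : c ≠ 0)
    (htop : c ≠ ⊤) :
    ∀ᵐ t ∂ν, c.toReal * ((c⁻¹ • ρ).rnDeriv ν t).toReal = (ρ.rnDeriv ν t).toReal := by
  filter_upwards [rnDeriv_smul_left_of_ne_top ρ ν (ENNReal.inv_ne_top.2 h0)] with t ht
  rw [ht, Pi.smul_apply, smul_eq_mul, ENNReal.toReal_mul, ENNReal.toReal_inv, ← mul_assoc,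
    mul_inv_cancel₀ (ENNReal.toReal_ne_zero.2 ⟨h0, htop⟩), one_mul]

theorem apply_eq_indicator_of_oneHot {Ω : Type*} {k : ℕ} {Y : Ω → EuclideanSpace ℝ (Fin k)}
    (hY : ∀ ω, ∃ i, Y ω = EuclideanSpace.single i 1)
    (i : Fin k) : (fun ω => Y ω i) = {ω | Y ω = EuclideanSpace.single i 1}.indicator 1 := by
  funext ω
  obtain ⟨j, hj⟩ := hY ω
  by_cases hij : i = j
  · simp [hj, hij]
  · have hne : EuclideanSpace.single j (1 : ℝ) ≠ EuclideanSpace.single i 1 := fun h => by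
      simpa [hij] using congrArg (· i) h
    simp [hj, hij, hne]

section

variable {Ω β : Type*} [MeasurableSpace Ω] [MeasurableSpace β] {μ : Measure Ω} {T : Ω → β}

theorem condExp_indicator_comap_ae_eq_rnDeriv [IsFiniteMeasure μ] (hT : Measurable T)
    {s : Set Ω} (hs : MeasurableSet s) :
    μ[s.indicator 1 | MeasurableSpace.comap T inferInstance] =ᵐ[μ]
      fun ω => (((μ.restrict s).map T).rnDeriv (μ.map T) (T ω)).toReal := by
  set d := fun t => (((μ.restrict s).map T).rnDeriv (μ.map T) t).toReal
  have hd : Measurable d := (Measure.measurable_rnDeriv _ _).ennreal_toReal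
  have hdT : Integrable (fun ω => d (T ω)) μ :=
    (integrable_map_measure hd.aestronglyMeasurable hT.aemeasurable).1
      Measure.integrable_toReal_rnDeriv
  refine (ae_eq_condExp_of_forall_setIntegral_eq hT.comap_le
    ((integrable_const 1).indicator hs) (fun _ _ _ => hdT.integrableOn) ?_
    (hd.comp (Measurable.of_comap_le le_rfl)).aestronglyMeasurable).symm
  rintro _ ⟨A, hA, rfl⟩ -
  calc ∫ ω in T ⁻¹' A, d (T ω) ∂μ = ∫ t in A, d t ∂μ.map T :=
        (setIntegral_map hA hd.aestronglyMeasurable hT.aemeasurable).symm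
    _ = ((μ.restrict s).map T).real A := Measure.setIntegral_toReal_rnDeriv
        (Measure.map_mono Measure.restrict_le_self hT).absolutelyContinuous A
    _ = ∫ ω in T ⁻¹' A, s.indicator 1 ω ∂μ := by
        rw [map_measureReal_apply hT hA, measureReal_restrict_apply (hT hA),
          setIntegral_indicator hs]
        simp

/-- The vector `(π_i (dP_i/dP)(t))_i` of the paper: `π_i P_i` is the law of `T` under `μ`
restricted to `{Y = e_i}`, so no normalisation by `π_i` is needed. -/
noncomputable def labelPosterior {k : ℕ} (μ : Measure Ω) (T : Ω → β)
    (Y : Ω → EuclideanSpace ℝ (Fin k)) (t : β) : EuclideanSpace ℝ (Fin k) :=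
  vecE fun i =>
    (((μ.restrict {ω | Y ω = EuclideanSpace.single i 1}).map T).rnDeriv (μ.map T) t).toReal

theorem measurable_labelPosterior {k : ℕ} (Y : Ω → EuclideanSpace ℝ (Fin k)) :
    Measurable (labelPosterior μ T Y) :=
  (PiLp.continuous_toLp 2 _).measurable.comp <|
    measurable_pi_lambda _ fun _ => (Measure.measurable_rnDeriv _ _).ennreal_toReal

variable {k : ℕ} {Y : Ω → EuclideanSpace ℝ (Fin k)}

theorem integrable_of_oneHot [IsFiniteMeasure μ] (hYm : Measurable Y)
    (hY : ∀ ω, ∃ i, Y ω = EuclideanSpace.single i 1) : Integrable Y μ :=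
  Integrable.of_bound hYm.aestronglyMeasurable 1 <| .of_forall fun ω => by
    obtain ⟨j, hj⟩ := hY ω
    simp [hj]

theorem integral_oneHot [IsFiniteMeasure μ] (hYm : Measurable Y)
    (hY : ∀ ω, ∃ i, Y ω = EuclideanSpace.single i 1) :
    ∫ ω, Y ω ∂μ = vecE fun i => (μ {ω | Y ω = EuclideanSpace.single i 1}).toReal := by
  ext i
  change EuclideanSpace.proj i _ = _
  rw [← (EuclideanSpace.proj i).integral_comp_comm (integrable_of_oneHot hYm hY)]
  change ∫ ω, Y ω i ∂μ = _
  rw [apply_eq_indicator_of_oneHot hY i]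
  exact integral_indicator_one (hYm (measurableSet_singleton _))

theorem condExp_comap_ae_eq_labelPosterior [IsFiniteMeasure μ] (hT : Measurable T)
    (hYm : Measurable Y) (hY : ∀ ω, ∃ i, Y ω = EuclideanSpace.single i 1) :
    μ[Y | MeasurableSpace.comap T inferInstance] =ᵐ[μ] fun ω => labelPosterior μ T Y (T ω) := by
  have hcoord : ∀ i, ∀ᵐ ω ∂μ,
      (μ[Y | MeasurableSpace.comap T inferInstance] ω) i = labelPosterior μ T Y (T ω) i := by
    intro i
    filter_upwards [(EuclideanSpace.proj i).comp_condExp_comm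
      (m := MeasurableSpace.comap T inferInstance) (integrable_of_oneHot hYm hY),
      condExp_indicator_comap_ae_eq_rnDeriv hT
        (hYm (measurableSet_singleton (EuclideanSpace.single i 1)))] with ω h1 h2
    have hYi : ⇑(EuclideanSpace.proj i) ∘ Y = _ := apply_eq_indicator_of_oneHot hY i
    rw [hYi] at h1
    exact h1.trans h2
  filter_upwards [ae_all_iff.2 hcoord] with ω hω
  exact PiLp.ext hω

theorem ae_labelPosterior_mem_simplexE [IsFiniteMeasure μ] (hT : Measurable T)
    (hYm : Measurable Y) (hY : ∀ ω, ∃ i, Y ω = EuclideanSpace.single i 1) :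
    ∀ᵐ t ∂μ.map T, labelPosterior μ T Y t ∈ simplexE k := by
  rw [ae_map_iff hT.aemeasurable
    (measurable_labelPosterior Y (isCompact_simplexE k).isClosed.measurableSet)]
  set S := fun i => {ω | Y ω = EuclideanSpace.single i 1}
  have hS : ∀ i, MeasurableSet (S i) := fun i => hYm (measurableSet_singleton _)
  have hpartition : ∑ i, (S i).indicator (1 : Ω → ℝ) = fun _ => 1 := by
    funext ω
    simp only [Finset.sum_apply, S, ← apply_eq_indicator_of_oneHot hY]
    obtain ⟨j, hj⟩ := hY ω
    simp [hj]
  have hsum := condExp_finsetSum (μ := μ) (s := Finset.univ)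
    (f := fun i => (S i).indicator (1 : Ω → ℝ)) (fun i _ => (integrable_const 1).indicator (hS i))
    (MeasurableSpace.comap T inferInstance)
  rw [hpartition, condExp_const hT.comap_le] at hsum
  filter_upwards [hsum, ae_all_iff.2 fun i => condExp_indicator_comap_ae_eq_rnDeriv hT (hS i)]
    with ω h1 h2
  refine ⟨fun i => ENNReal.toReal_nonneg, ?_⟩
  simp only [Finset.sum_apply, h2] at h1
  exact h1.symm

theorem ae_vecE_mul_rnDeriv_eq_labelPosterior [IsFiniteMeasure μ]
    (hpos : ∀ i, 0 < μ {ω | Y ω = EuclideanSpace.single i 1}) :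
    ∀ᵐ t ∂μ.map T, (vecE fun i => (μ {ω | Y ω = EuclideanSpace.single i 1}).toReal *
      (((μ {ω | Y ω = EuclideanSpace.single i 1})⁻¹ •
        (μ.restrict {ω | Y ω = EuclideanSpace.single i 1}).map T).rnDeriv (μ.map T) t).toReal)
      = labelPosterior μ T Y t := by
  filter_upwards [ae_all_iff.2 fun i => Measure.toReal_mul_rnDeriv_inv_smul
    ((μ.restrict {ω | Y ω = EuclideanSpace.single i 1}).map T) _
    (hpos i).ne' (measure_ne_top μ _)] with t ht
  exact congrArg vecE (funext ht)

end

theorem sharpness_as_f_divergence_general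
    {Ω 𝒳 : Type*} [MeasurableSpace Ω] [MeasurableSpace 𝒳]
    (μ : Measure Ω) [IsProbabilityMeasure μ] {k : ℕ}
    (X : Ω → 𝒳) (Y : Ω → EuclideanSpace ℝ (Fin k))
    (g : 𝒳 → EuclideanSpace ℝ (Fin k))
    (F : EuclideanSpace ℝ (Fin k) → ℝ)
    (hX : Measurable X) (hY : Measurable Y) (hg : Measurable g)
    (hYoh : ∀ ω, ∃ i, Y ω = EuclideanSpace.single i 1)
    (hpos : ∀ i : Fin k, 0 < μ {ω | Y ω = EuclideanSpace.single i 1})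
    (hFc : ContinuousOn F (simplexE k)) :
    ∫ ω, breg F
        ((μ[Y | MeasurableSpace.comap (fun ω' => g (X ω')) inferInstance]) ω)
        (∫ ω', Y ω' ∂μ) ∂μ
      = ∫ t,
          (F (vecE fun i =>
              (μ {ω' | Y ω' = EuclideanSpace.single i 1}).toReal *
                (((μ {ω' | Y ω' = EuclideanSpace.single i 1})⁻¹ •
                    (μ.restrict {ω' | Y ω' = EuclideanSpace.single i 1}).map
                      (fun ω' => g (X ω'))).rnDeriv
                  (μ.map (fun ω' => g (X ω'))) t).toReal)
            - F (vecE fun i => (μ {ω' | Y ω' = EuclideanSpace.single i 1}).toReal))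
          ∂(μ.map (fun ω' => g (X ω'))) := by
  set T : Ω → EuclideanSpace ℝ (Fin k) := fun ω => g (X ω)
  have hT : Measurable T := hg.comp hX
  have := Measure.isProbabilityMeasure_map (μ := μ) hT.aemeasurable
  set η := labelPosterior μ T Y
  have hFη : Integrable (fun t => F (η t)) (μ.map T) :=
    hFc.integrable_comp_of_ae_mem (isCompact_simplexE k)
      (measurable_labelPosterior Y).aemeasurable (ae_labelPosterior_mem_simplexE hT hY hYoh)
  have hFcondExp : (fun ω => F (μ[Y | MeasurableSpace.comap T inferInstance] ω)) =ᵐ[μ]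
      fun ω => F (η (T ω)) :=
    (condExp_comap_ae_eq_labelPosterior hT hY hYoh).fun_comp F
  have hFcondExp_int :
      Integrable (fun ω => F (μ[Y | MeasurableSpace.comap T inferInstance] ω)) μ :=
    ((integrable_map_measure hFη.aestronglyMeasurable hT.aemeasurable).1 hFη).congr
      hFcondExp.symm
  calc _ = ∫ ω, F (μ[Y | MeasurableSpace.comap T inferInstance] ω) ∂μ - F (∫ ω, Y ω ∂μ) := by
        simpa only [integral_condExp hT.comap_le] using
          integral_breg_integral integrable_condExp hFcondExp_int
    _ = ∫ t, F (η t) ∂μ.map T - F (∫ ω, Y ω ∂μ) := by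
        rw [integral_congr_ae hFcondExp, integral_map hT.aemeasurable hFη.aestronglyMeasurable]
    _ = _ := by
        symm
        rw [integral_congr_ae ((ae_vecE_mul_rnDeriv_eq_labelPosterior hpos).mono
            fun t ht => by rw [ht]), integral_sub hFη (integrable_const _), integral_const,
          integral_oneHot hY hYoh]
        simp

/-- Proposition 1: sharpness as a multi-distribution f-divergence:
`SHARP_F(g) = ∫ [F(π_1 (dP_1/dP)(t), …, π_k (dP_k/dP)(t)) − F(π_1,…,π_k)] dP(t)`. -/
theorem sharpness_as_f_divergence
    {Ω 𝒳 : Type*} [MeasurableSpace Ω] [MeasurableSpace 𝒳]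
    (μ : Measure Ω) [IsProbabilityMeasure μ] {k : ℕ}
    (X : Ω → 𝒳) (Y : Ω → EuclideanSpace ℝ (Fin k))
    (g : 𝒳 → EuclideanSpace ℝ (Fin k))
    (F : EuclideanSpace ℝ (Fin k) → ℝ)
    (hX : Measurable X) (hY : Measurable Y) (hg : Measurable g)
    (hYoh : ∀ ω, ∃ i, Y ω = EuclideanSpace.single i 1)
    (hgs : ∀ x, g x ∈ simplexE k)
    (hpos : ∀ i : Fin k, 0 < μ {ω | Y ω = EuclideanSpace.single i 1})
    (U : Set (EuclideanSpace ℝ (Fin k))) (hU : IsOpen U) (hUs : simplexE k ⊆ U)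
    (hF : ConvexOn ℝ Set.univ F)
    (hFd : ∀ p ∈ U, DifferentiableAt ℝ F p)
    (hFc : ContinuousOn F (simplexE k))
    (hgFc : ContinuousOn (gradient F) (simplexE k)) :
    ∫ ω, breg F
        ((μ[Y | MeasurableSpace.comap (fun ω' => g (X ω')) inferInstance]) ω)
        (∫ ω', Y ω' ∂μ) ∂μ
      = ∫ t,
          (F (vecE fun i =>
              (μ {ω' | Y ω' = EuclideanSpace.single i 1}).toReal *
                (((μ {ω' | Y ω' = EuclideanSpace.single i 1})⁻¹ •
                    (μ.restrict {ω' | Y ω' = EuclideanSpace.single i 1}).map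
                      (fun ω' => g (X ω'))).rnDeriv
                  (μ.map (fun ω' => g (X ω'))) t).toReal)
            - F (vecE fun i => (μ {ω' | Y ω' = EuclideanSpace.single i 1}).toReal))
          ∂(μ.map (fun ω' => g (X ω'))) :=
  sharpness_as_f_divergence_general μ X Y g F hX hY hg hYoh hpos hFc
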